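/- arXiv:2311.17262 — 8 statements merged into one kernel-verified Lean document; each statement's English description precedes it below -/
import Mathlib

section
/- Let M be a binary t×N matrix (entries in {0,1}) and let a_max, w_min be integers with 1 ≤ a_max ≤ w_min ≤ t. Suppose every column of M has at least w_min ones, and every two distinct columns of M have at most a_max rows in which both have a 1. Then M is ⌊(w_min − 1)/a_max⌋-disjunct. -/
/-- A binary `t × N` matrix (entries in `ZMod 2`) is `D`-disjunct if for every column `j`
and every set `T` of at most `D` other columns, there is a row with a `1` in column `j`
and a `0` in every column of `T`. -/
def Disjunct {t N : ℕ} (M : Matrix (Fin t) (Fin N) (ZMod 2)) (D : ℕ) : Prop :=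
  ∀ j : Fin N, ∀ T : Finset (Fin N), j ∉ T → T.card ≤ D →
    ∃ i : Fin t, M i j = 1 ∧ ∀ j' ∈ T, M i j' = 0

lemma zmod2_ne_one {x : ZMod 2} (h : x ≠ 1) : x = 0 := by
  revert h; revert x; decide

theorem kautz_singleton_disjunct {t N : ℕ} (M : Matrix (Fin t) (Fin N) (ZMod 2))
    (a_max w_min : ℕ) (h1 : 1 ≤ a_max) (h2 : a_max ≤ w_min) (h3 : w_min ≤ t)
    (hcol : ∀ j : Fin N, w_min ≤ (Finset.univ.filter (fun i => M i j = 1)).card)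
    (hpair : ∀ j j' : Fin N, j ≠ j' →
      (Finset.univ.filter (fun i => M i j = 1 ∧ M i j' = 1)).card ≤ a_max) :
    Disjunct M ((w_min - 1) / a_max) := by
  intro j T hjT hT
  set S := Finset.univ.filter (fun i => M i j = 1) with hS
  classical
  set B := S.filter (fun i => ∃ j' ∈ T, M i j' = 1) with hB
  have hsub : B ⊆ T.biUnion (fun j' => Finset.univ.filter (fun i => M i j = 1 ∧ M i j' = 1)) := by
    intro i hi
    simp only [hB, hS, Finset.mem_filter, Finset.mem_univ, true_and] at hi
    obtain ⟨hij, j', hj'T, hij'⟩ := hi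
    exact Finset.mem_biUnion.mpr ⟨j', hj'T, by simp [hij, hij']⟩
  have hBcard : B.card ≤ T.card * a_max := by
    calc B.card ≤ _ := Finset.card_le_card hsub
      _ ≤ ∑ j' ∈ T, (Finset.univ.filter (fun i => M i j = 1 ∧ M i j' = 1)).card :=
        Finset.card_biUnion_le
      _ ≤ T.card * a_max := by
        apply Finset.sum_le_card_nsmul
        intro j' hj'
        exact hpair j j' (fun h => hjT (h ▸ hj'))
  have hlt : B.card < S.card := by
    have h4 : T.card * a_max ≤ (w_min - 1) / a_max * a_max :=
      Nat.mul_le_mul_right _ hT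
    have h5 : (w_min - 1) / a_max * a_max ≤ w_min - 1 := Nat.div_mul_le_self _ _
    have h6 : w_min ≤ S.card := hcol j
    omega
  have : (S \ B).Nonempty := by
    rw [← Finset.card_pos, Finset.card_sdiff_of_subset (Finset.filter_subset _ _), ← hB]
    omega
  obtain ⟨i, hi⟩ := this
  rw [Finset.mem_sdiff] at hi
  obtain ⟨hiS, hiB⟩ := hi
  simp only [hS, Finset.mem_filter, Finset.mem_univ, true_and] at hiS
  refine ⟨i, hiS, fun j' hj' => ?_⟩
  apply zmod2_ne_one
  intro h
  exact hiB (by simp only [hB, Finset.mem_filter]; exact ⟨by simp [hS, hiS], j', hj', h⟩)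
end

section
/- Let 0 < D < N be integers. There do not exist two distinct D-element subsets S₁ ≠ S₂ of {1,…,N} and two distinct (D+1)-element subsets U₁ ≠ U₂ of {1,…,N} such that Sᵢ ⊆ Uⱼ for all i, j ∈ {1,2}. Equivalently, the Tanner graph of the Macula matrix M(D, D+1, N) contains no 4-cycle, so its girth is at least 6. -/
/-- The Tanner graph of the Macula matrix `M(D, D+1, N)` contains no 4-cycle: there do not
exist two distinct `D`-subsets `S₁ ≠ S₂` and two distinct `(D+1)`-subsets `U₁ ≠ U₂` of
`{1, …, N}` with `Sᵢ ⊆ Uⱼ` for all `i, j`. -/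
theorem macula_no_four_cycle (D N : ℕ) (hD : 0 < D) (hN : D < N) :
    ¬ ∃ (S₁ S₂ U₁ U₂ : Finset (Fin N)),
        S₁.card = D ∧ S₂.card = D ∧ S₁ ≠ S₂ ∧
        U₁.card = D + 1 ∧ U₂.card = D + 1 ∧ U₁ ≠ U₂ ∧
        S₁ ⊆ U₁ ∧ S₁ ⊆ U₂ ∧ S₂ ⊆ U₁ ∧ S₂ ⊆ U₂ := by
  rintro ⟨S₁, S₂, U₁, U₂, hS₁, hS₂, hSne, hU₁, hU₂, hUne, h11, h12, h21, h22⟩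
  have hsub : S₁ ∪ S₂ ⊆ U₁ ∩ U₂ := by
    intro x hx
    rcases Finset.mem_union.mp hx with h | h <;>
      exact Finset.mem_inter.mpr ⟨by solve_by_elim, by solve_by_elim⟩
  have h1 : D + 1 ≤ (S₁ ∪ S₂).card := by
    have hne : S₁ ∪ S₂ ≠ S₁ := by
      intro h
      apply hSne
      exact Finset.eq_of_subset_of_card_le
        (Finset.union_eq_left.mp h) (le_of_eq (hS₁.trans hS₂.symm)) |>.symm
    have : S₁ ⊂ S₁ ∪ S₂ := Finset.ssubset_iff_subset_ne.mpr ⟨Finset.subset_union_left, hne.symm⟩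
    have := Finset.card_lt_card this
    omega
  have h2 : (U₁ ∩ U₂).card < D + 1 := by
    have hne : U₁ ∩ U₂ ≠ U₁ := by
      intro h
      apply hUne
      exact Finset.eq_of_subset_of_card_le
        (Finset.inter_eq_left.mp h) (le_of_eq (hU₂.trans hU₁.symm))
    have : U₁ ∩ U₂ ⊂ U₁ := Finset.ssubset_iff_subset_ne.mpr ⟨Finset.inter_subset_left, hne⟩
    calc (U₁ ∩ U₂).card < U₁.card := Finset.card_lt_card this
      _ = D + 1 := hU₁
  have := Finset.card_le_card hsub
  omega
end

section
/- Let D ≥ 1 and N ≥ D + 2 be integers. The number of pairs (𝒮, 𝒰), where 𝒮 is a set of three pairwise distinct D-element subsets of {1,…,N}, 𝒰 is a set of three pairwise distinct (D+1)-element subsets of {1,…,N}, each member of 𝒮 is contained in exactly two members of 𝒰, and each member of 𝒰 contains exactly two members of 𝒮, is equal to C(N, D+2)·C(D+2, 3). (Each such pair corresponds to a 6-cycle in the Tanner graph of the Macula matrix M(D, D+1, N), so this counts the 6-cycles.) -/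
open Finset

variable {α : Type*} [DecidableEq α]

lemma tri_sdiff {I : Finset α} {a b c : α} (hab : a ≠ b) (hac : a ≠ c)
    (hb : b ∉ I) (hc : c ∉ I) :
    insert a (insert b (insert c I)) \ ({a,b,c} : Finset α).erase a = insert a I := by
  ext x
  simp only [Finset.mem_sdiff, Finset.mem_insert, Finset.mem_erase, Finset.mem_singleton,
    not_and, not_or]
  by_cases e1 : x = a <;> by_cases e2 : x = b <;> by_cases e3 : x = c <;> simp_all

lemma tri_union {I : Finset α} (b c : α) :
    insert b I ∪ insert c I = insert b (insert c I) := by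
  rw [Finset.insert_union, Finset.union_insert, Finset.union_self]

lemma tri_erase {I : Finset α} {a b c : α} (hab : a ≠ b) (hac : a ≠ c) (ha : a ∉ I) :
    (insert a (insert b (insert c I))).erase a = insert b (insert c I) := by
  apply Finset.erase_insert
  simp only [Finset.mem_insert, not_or]
  exact ⟨hab, hac, ha⟩

lemma union_eq {D : ℕ} {S S' U : Finset α} (hne : S ≠ S')
    (cS : S.card = D) (cS' : S'.card = D) (cU : U.card = D + 1)
    (h1 : S ⊆ U) (h2 : S' ⊆ U) : U = S ∪ S' ∧ (S ∩ S').card + 1 = D := by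
  have hkey := Finset.card_union_add_card_inter S S'
  have hiltD : (S ∩ S').card ≠ D := by
    intro hc
    have h3 : S ∩ S' = S := Finset.eq_of_subset_of_card_le Finset.inter_subset_left (by omega)
    have h4 : S ⊆ S' := by rw [← h3]; exact Finset.inter_subset_right
    exact hne (Finset.eq_of_subset_of_card_le h4 (by omega))
  have hile : (S ∩ S').card ≤ D := cS ▸ Finset.card_le_card Finset.inter_subset_left
  have hsub : S ∪ S' ⊆ U := Finset.union_subset h1 h2
  have hcle : U.card ≤ (S ∪ S').card := by
    have := Finset.card_le_card hsub; omega
  have heq := Finset.eq_of_subset_of_card_le hsub hcle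
  exact ⟨heq.symm, by rw [heq] at hkey; omega⟩

lemma core {D : ℕ} {S1 S2 S3 U1 U2 U3 : Finset α}
    (hS12 : S1 ≠ S2) (hS13 : S1 ≠ S3) (hS23 : S2 ≠ S3)
    (cS1 : S1.card = D) (cS2 : S2.card = D) (cS3 : S3.card = D)
    (cU1 : U1.card = D+1) (cU2 : U2.card = D+1) (cU3 : U3.card = D+1)
    (h21 : S2 ⊆ U1) (h31 : S3 ⊆ U1) (h12 : S1 ⊆ U2) (h32 : S3 ⊆ U2)
    (h13 : S1 ⊆ U3) (h23 : S2 ⊆ U3)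
    (n1 : ¬ S1 ⊆ U1) (n2 : ¬ S2 ⊆ U2) (n3 : ¬ S3 ⊆ U3) :
    ∃ W T : Finset α, W.card = D + 2 ∧ T ⊆ W ∧ T.card = 3 ∧
      ({S1,S2,S3} : Finset (Finset α)) = T.image (fun a => W \ (T.erase a)) ∧
      ({U1,U2,U3} : Finset (Finset α)) = T.image (fun a => W.erase a) := by
  obtain ⟨hU1, hi23⟩ := union_eq hS23 cS2 cS3 cU1 h21 h31
  obtain ⟨hU2, hi13⟩ := union_eq hS13 cS1 cS3 cU2 h12 h32
  obtain ⟨hU3, hi12⟩ := union_eq hS12 cS1 cS2 cU3 h13 h23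
  obtain ⟨a1, ha1S, ha1U⟩ := Finset.not_subset.mp n1
  obtain ⟨a2, ha2S, ha2U⟩ := Finset.not_subset.mp n2
  obtain ⟨a3, ha3S, ha3U⟩ := Finset.not_subset.mp n3
  rw [hU1, Finset.mem_union] at ha1U
  rw [hU2, Finset.mem_union] at ha2U
  rw [hU3, Finset.mem_union] at ha3U
  push_neg at ha1U ha2U ha3U
  obtain ⟨ha1S2, ha1S3⟩ := ha1U
  obtain ⟨ha2S1, ha2S3⟩ := ha2U
  obtain ⟨ha3S1, ha3S2⟩ := ha3U
  have inter_eqs : ∀ (A B C : Finset α) (a : α), A.card = D → (A ∩ B).card + 1 = D →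
      (A ∩ C).card + 1 = D → a ∈ A → a ∉ B → a ∉ C → A ∩ B = A ∩ C := by
    intro A B C a cA iAB iAC haA haB haC
    have h1 : A ∩ B ⊆ A.erase a := fun x hx => Finset.mem_erase.mpr
      ⟨fun h => haB (h ▸ (Finset.mem_inter.mp hx).2), (Finset.mem_inter.mp hx).1⟩
    have h2 : A ∩ C ⊆ A.erase a := fun x hx => Finset.mem_erase.mpr
      ⟨fun h => haC (h ▸ (Finset.mem_inter.mp hx).2), (Finset.mem_inter.mp hx).1⟩
    have hce : (A.erase a).card = D - 1 := by rw [Finset.card_erase_of_mem haA, cA]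
    have e1 : A ∩ B = A.erase a := Finset.eq_of_subset_of_card_le h1 (by omega)
    have e2 : A ∩ C = A.erase a := Finset.eq_of_subset_of_card_le h2 (by omega)
    rw [e1, e2]
  have e12_13 : S1 ∩ S2 = S1 ∩ S3 := inter_eqs S1 S2 S3 a1 cS1 hi12 hi13 ha1S ha1S2 ha1S3
  have hIS3 : S1 ∩ S2 ⊆ S3 := e12_13 ▸ Finset.inter_subset_right
  have hIS1 : S1 ∩ S2 ⊆ S1 := Finset.inter_subset_left
  have hIS2 : S1 ∩ S2 ⊆ S2 := Finset.inter_subset_right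
  have hins : ∀ (A : Finset α) (a : α), A.card = D → S1 ∩ S2 ⊆ A → a ∈ A → a ∉ S1 ∩ S2 →
      A = insert a (S1 ∩ S2) := by
    intro A a cA hIA haA haI
    have hsub : insert a (S1 ∩ S2) ⊆ A := Finset.insert_subset haA hIA
    have hc : (insert a (S1 ∩ S2)).card = D := by
      rw [Finset.card_insert_of_notMem haI]; omega
    exact (Finset.eq_of_subset_of_card_le hsub (by omega)).symm
  have ha1I : a1 ∉ S1 ∩ S2 := fun h => ha1S2 (hIS2 h)
  have ha2I : a2 ∉ S1 ∩ S2 := fun h => ha2S1 (hIS1 h)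
  have ha3I : a3 ∉ S1 ∩ S2 := fun h => ha3S1 (hIS1 h)
  have hS1e : S1 = insert a1 (S1 ∩ S2) := hins S1 a1 cS1 hIS1 ha1S ha1I
  have hS2e : S2 = insert a2 (S1 ∩ S2) := hins S2 a2 cS2 hIS2 ha2S ha2I
  have hS3e : S3 = insert a3 (S1 ∩ S2) := hins S3 a3 cS3 hIS3 ha3S ha3I
  have h12' : a1 ≠ a2 := fun h => ha1S2 (h ▸ ha2S)
  have h13' : a1 ≠ a3 := fun h => ha1S3 (h ▸ ha3S)
  have h23' : a2 ≠ a3 := fun h => ha2S3 (h ▸ ha3S)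
  -- make I opaque
  obtain ⟨I, hIeq⟩ : ∃ I, S1 ∩ S2 = I := ⟨_, rfl⟩
  rw [hIeq] at hS1e hS2e hS3e ha1I ha2I ha3I hi12
  rw [hS2e, hS3e, tri_union] at hU1
  rw [hS1e, hS3e, tri_union] at hU2
  rw [hS1e, hS2e, tri_union] at hU3
  have hW2 : insert a1 (insert a2 (insert a3 I)) = insert a2 (insert a1 (insert a3 I)) :=
    Finset.insert_comm _ _ _
  have hW3 : insert a1 (insert a2 (insert a3 I)) = insert a3 (insert a1 (insert a2 I)) := by
    rw [Finset.insert_comm a2 a3, Finset.insert_comm a1 a3]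
  have hT2 : ({a1,a2,a3} : Finset α) = {a2,a1,a3} := Finset.insert_comm _ _ _
  have hT3 : ({a1,a2,a3} : Finset α) = {a3,a1,a2} := by
    rw [Finset.pair_comm a2 a3, Finset.insert_comm a1 a3]
  refine ⟨insert a1 (insert a2 (insert a3 I)), {a1,a2,a3}, ?_, ?_, ?_, ?_, ?_⟩
  · rw [Finset.card_insert_of_notMem (by simp [h12', h13', ha1I]),
      Finset.card_insert_of_notMem (by simp [h23', ha2I]),
      Finset.card_insert_of_notMem ha3I]
    omega
  · intro x hx
    simp only [Finset.mem_insert, Finset.mem_singleton] at hx ⊢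
    tauto
  · rw [Finset.card_insert_of_notMem (by simp [h12', h13']),
      Finset.card_insert_of_notMem (by simp [h23']), Finset.card_singleton]
  · rw [Finset.image_insert, Finset.image_insert, Finset.image_singleton]
    have w1 : insert a1 (insert a2 (insert a3 I)) \ ({a1,a2,a3} : Finset α).erase a1 = S1 := by
      rw [hS1e]; exact tri_sdiff h12' h13' ha2I ha3I
    have w2 : insert a1 (insert a2 (insert a3 I)) \ ({a1,a2,a3} : Finset α).erase a2 = S2 := by
      rw [hS2e, hW2, hT2]; exact tri_sdiff h12'.symm h23' ha1I ha3I
    have w3 : insert a1 (insert a2 (insert a3 I)) \ ({a1,a2,a3} : Finset α).erase a3 = S3 := by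
      rw [hS3e, hW3, hT3]; exact tri_sdiff h13'.symm h23'.symm ha1I ha2I
    rw [w1, w2, w3]
  · rw [Finset.image_insert, Finset.image_insert, Finset.image_singleton]
    have u1 : (insert a1 (insert a2 (insert a3 I))).erase a1 = U1 := by
      rw [hU1]; exact tri_erase h12' h13' ha1I
    have u2 : (insert a1 (insert a2 (insert a3 I))).erase a2 = U2 := by
      rw [hU2, hW2]; exact tri_erase h12'.symm h23' ha2I
    have u3 : (insert a1 (insert a2 (insert a3 I))).erase a3 = U3 := by
      rw [hU3, hW3]; exact tri_erase h13'.symm h23'.symm ha3I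
    rw [u1, u2, u3]


lemma sup_eq {W T : Finset α} (hTW : T ⊆ W) (hT : 2 ≤ T.card) :
    (T.image fun a => W \ T.erase a).sup id = W := by
  rw [Finset.sup_image]
  apply le_antisymm
  · exact Finset.sup_le fun a _ => Finset.sdiff_subset
  · intro x hx
    by_cases hxT : x ∈ T
    · exact Finset.le_sup (f := fun a => W \ T.erase a) hxT
        (Finset.mem_sdiff.mpr ⟨hx, Finset.notMem_erase x T⟩)
    · obtain ⟨a, ha⟩ := Finset.card_pos.mp (show 0 < T.card by omega)
      exact Finset.le_sup (f := fun a => W \ T.erase a) ha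
        (Finset.mem_sdiff.mpr ⟨hx, fun h => hxT (Finset.mem_of_mem_erase h)⟩)

lemma inf_eq [Fintype α] {W T : Finset α} (hTW : T ⊆ W) (hT : 2 ≤ T.card) :
    (T.image fun a => W \ T.erase a).inf id = W \ T := by
  rw [Finset.inf_image]
  apply le_antisymm
  · intro x hx
    obtain ⟨a0, ha0⟩ := Finset.card_pos.mp (show 0 < T.card by omega)
    have hx0 := (Finset.inf_le (f := fun a => W \ T.erase a) ha0) hx
    rw [Finset.mem_sdiff] at hx0
    rw [Finset.mem_sdiff]
    refine ⟨hx0.1, fun hxT => ?_⟩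
    obtain ⟨a1, ha1, hne⟩ := Finset.exists_mem_ne (show 1 < T.card by omega) x
    have hx1 := (Finset.inf_le (f := fun a => W \ T.erase a) ha1) hx
    rw [Finset.mem_sdiff] at hx1
    exact hx1.2 (Finset.mem_erase.mpr ⟨fun h => hne (h.symm), hxT⟩)
  · exact Finset.le_inf fun a _ =>
      Finset.sdiff_subset_sdiff (Finset.Subset.refl W) (Finset.erase_subset a T)

lemma forward {D : ℕ} {W T : Finset α} (hW : W.card = D + 2) (hTW : T ⊆ W) (hT : T.card = 3) :
    (T.image fun a => W \ T.erase a).card = 3 ∧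
    (∀ S ∈ T.image fun a => W \ T.erase a, S.card = D) ∧
    (T.image fun a => W.erase a).card = 3 ∧
    (∀ U ∈ T.image fun a => W.erase a, U.card = D + 1) ∧
    (∀ S ∈ T.image fun a => W \ T.erase a,
      ((T.image fun a => W.erase a).filter (fun U => S ⊆ U)).card = 2) ∧
    (∀ U ∈ T.image fun a => W.erase a,
      ((T.image fun a => W \ T.erase a).filter (fun S => S ⊆ U)).card = 2) := by
  have inj1 : Set.InjOn (fun a => W \ T.erase a) T := by
    intro a ha b hb h
    replace h : W \ T.erase a = W \ T.erase b := h
    have haa : a ∈ W \ T.erase a := Finset.mem_sdiff.mpr ⟨hTW ha, Finset.notMem_erase a T⟩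
    rw [h] at haa
    have := (Finset.mem_sdiff.mp haa).2
    by_contra hne
    exact this (Finset.mem_erase.mpr ⟨hne, ha⟩)
  have inj2 : Set.InjOn (fun a => W.erase a) T := by
    intro a ha b hb h
    by_contra hne
    replace h : W.erase a = W.erase b := h
    have : a ∈ W.erase b := Finset.mem_erase.mpr ⟨hne, hTW ha⟩
    rw [← h] at this
    exact (Finset.mem_erase.mp this).1 rfl
  have injE : ∀ a, Set.InjOn (fun b => W.erase b) (T.erase a : Finset α) := fun a =>
    inj2.mono (fun x hx => Finset.mem_of_mem_erase hx)
  have injS : ∀ a, Set.InjOn (fun b => W \ T.erase b) (T.erase a : Finset α) := fun a =>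
    inj1.mono (fun x hx => Finset.mem_of_mem_erase hx)
  refine ⟨?_, ?_, ?_, ?_, ?_, ?_⟩
  · rw [Finset.card_image_of_injOn inj1, hT]
  · intro S hS
    obtain ⟨a, ha, rfl⟩ := Finset.mem_image.mp hS
    rw [Finset.card_sdiff_of_subset ((Finset.erase_subset a T).trans hTW), hW,
      Finset.card_erase_of_mem ha, hT]
    omega
  · rw [Finset.card_image_of_injOn inj2, hT]
  · intro U hU
    obtain ⟨a, ha, rfl⟩ := Finset.mem_image.mp hU
    rw [Finset.card_erase_of_mem (hTW ha), hW]
    omega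
  · intro S hS
    obtain ⟨a, ha, rfl⟩ := Finset.mem_image.mp hS
    have hfe : (T.image fun b => W.erase b).filter (fun U => W \ T.erase a ⊆ U)
        = (T.erase a).image (fun b => W.erase b) := by
      rw [Finset.filter_image]
      congr 1
      ext b
      simp only [Finset.mem_filter, Finset.mem_erase]
      constructor
      · rintro ⟨hbT, hsub⟩
        have hmem := hsub (Finset.mem_sdiff.mpr ⟨hTW ha, Finset.notMem_erase a T⟩)
        exact ⟨fun hba => (Finset.mem_erase.mp hmem).1 hba.symm, hbT⟩
      · rintro ⟨hba, hbT⟩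
        refine ⟨hbT, fun x hx => ?_⟩
        rw [Finset.mem_sdiff] at hx
        refine Finset.mem_erase.mpr ⟨fun hxb => ?_, hx.1⟩
        subst hxb
        exact hx.2 (Finset.mem_erase.mpr ⟨hba, hbT⟩)
    rw [hfe, Finset.card_image_of_injOn (injE a), Finset.card_erase_of_mem ha, hT]
  · intro U hU
    obtain ⟨b, hb, rfl⟩ := Finset.mem_image.mp hU
    have hfe : (T.image fun a => W \ T.erase a).filter (fun S => S ⊆ W.erase b)
        = (T.erase b).image (fun a => W \ T.erase a) := by
      rw [Finset.filter_image]
      congr 1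
      ext a
      simp only [Finset.mem_filter, Finset.mem_erase]
      constructor
      · rintro ⟨haT, hsub⟩
        have hmem := hsub (Finset.mem_sdiff.mpr ⟨hTW haT, Finset.notMem_erase a T⟩)
        exact ⟨fun hab => (Finset.mem_erase.mp hmem).1 (hab ▸ rfl), haT⟩
      · rintro ⟨hab, haT⟩
        refine ⟨haT, fun x hx => ?_⟩
        rw [Finset.mem_sdiff] at hx
        refine Finset.mem_erase.mpr ⟨fun hxb => ?_, hx.1⟩
        subst hxb
        exact hx.2 (Finset.mem_erase.mpr ⟨fun hh => hab hh.symm, hb⟩)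
    rw [hfe, Finset.card_image_of_injOn (injS b), Finset.card_erase_of_mem hb, hT]


lemma filter_card_two {u v w : α} (P : α → Prop) [DecidablePred P]
    (huv : u ≠ v) (huw : u ≠ w) (hvw : v ≠ w)
    (h : (({u,v,w} : Finset α).filter P).card = 2) :
    (P u ∧ P v ∧ ¬ P w) ∨ (P u ∧ ¬ P v ∧ P w) ∨ (¬ P u ∧ P v ∧ P w) := by
  by_cases hu : P u <;> by_cases hv : P v <;> by_cases hw : P w <;>
    simp_all [Finset.filter_insert, Finset.filter_singleton, Finset.card_insert_of_notMem]

lemma noAB {A B C A' B' C' : Prop} (h : (A∧B∧C')∨(A∧B'∧C)∨(A'∧B∧C)) (na : ¬A) (nb : ¬B) : False := by tauto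
lemma noAC {A B C A' B' C' : Prop} (h : (A∧B∧C')∨(A∧B'∧C)∨(A'∧B∧C)) (na : ¬A) (nc : ¬C) : False := by tauto
lemma noBC {A B C A' B' C' : Prop} (h : (A∧B∧C')∨(A∧B'∧C)∨(A'∧B∧C)) (nb : ¬B) (nc : ¬C) : False := by tauto

set_option maxHeartbeats 1000000 in
lemma structure_thm {D : ℕ} {p : Finset (Finset α) × Finset (Finset α)}
    (h1 : p.1.card = 3) (h2 : ∀ S ∈ p.1, S.card = D) (h3 : p.2.card = 3)
    (h4 : ∀ U ∈ p.2, U.card = D+1)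
    (h5 : ∀ S ∈ p.1, (p.2.filter (fun U => S ⊆ U)).card = 2)
    (h6 : ∀ U ∈ p.2, (p.1.filter (fun S => S ⊆ U)).card = 2) :
    ∃ W T : Finset α, W.card = D + 2 ∧ T ⊆ W ∧ T.card = 3 ∧
      p.1 = T.image (fun a => W \ T.erase a) ∧ p.2 = T.image (fun a => W.erase a) := by
  classical
  obtain ⟨S1, S2, S3, hS12, hS13, hS23, hp1⟩ := Finset.card_eq_three.mp h1
  obtain ⟨U1, U2, U3, hU12, hU13, hU23, hp2⟩ := Finset.card_eq_three.mp h3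
  have mS1 : S1 ∈ p.1 := by rw [hp1]; simp
  have mS2 : S2 ∈ p.1 := by rw [hp1]; simp
  have mS3 : S3 ∈ p.1 := by rw [hp1]; simp
  have mU1 : U1 ∈ p.2 := by rw [hp2]; simp
  have mU2 : U2 ∈ p.2 := by rw [hp2]; simp
  have mU3 : U3 ∈ p.2 := by rw [hp2]; simp
  have cS1 := h2 S1 mS1
  have cS2 := h2 S2 mS2
  have cS3 := h2 S3 mS3
  have cU1 := h4 U1 mU1
  have cU2 := h4 U2 mU2
  have cU3 := h4 U3 mU3
  have d1 := filter_card_two (fun U => S1 ⊆ U) hU12 hU13 hU23 (by rw [← hp2]; exact h5 S1 mS1)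
  have d2 := filter_card_two (fun U => S2 ⊆ U) hU12 hU13 hU23 (by rw [← hp2]; exact h5 S2 mS2)
  have d3 := filter_card_two (fun U => S3 ⊆ U) hU12 hU13 hU23 (by rw [← hp2]; exact h5 S3 mS3)
  have e1 := filter_card_two (fun S => S ⊆ U1) hS12 hS13 hS23 (by rw [← hp1]; exact h6 U1 mU1)
  have e2 := filter_card_two (fun S => S ⊆ U2) hS12 hS13 hS23 (by rw [← hp1]; exact h6 U2 mU2)
  have e3 := filter_card_two (fun S => S ⊆ U3) hS12 hS13 hS23 (by rw [← hp1]; exact h6 U3 mU3)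
  rw [hp1, hp2]
  have key : ∀ V1 V2 V3 : Finset α, ({U1,U2,U3} : Finset (Finset α)) = {V1,V2,V3} →
      V1.card = D+1 → V2.card = D+1 → V3.card = D+1 →
      S2 ⊆ V1 → S3 ⊆ V1 → S1 ⊆ V2 → S3 ⊆ V2 → S1 ⊆ V3 → S2 ⊆ V3 →
      ¬S1 ⊆ V1 → ¬S2 ⊆ V2 → ¬S3 ⊆ V3 →
      ∃ W T : Finset α, W.card = D + 2 ∧ T ⊆ W ∧ T.card = 3 ∧
        ({S1,S2,S3} : Finset (Finset α)) = T.image (fun a => W \ T.erase a) ∧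
        ({U1,U2,U3} : Finset (Finset α)) = T.image (fun a => W.erase a) := by
    intro V1 V2 V3 hperm c1 c2 c3 a21 a31 a12 a32 a13 a23 n1 n2 n3
    obtain ⟨W, T, w1, w2, w3, w4, w5⟩ := core hS12 hS13 hS23 cS1 cS2 cS3 c1 c2 c3
      a21 a31 a12 a32 a13 a23 n1 n2 n3
    exact ⟨W, T, w1, w2, w3, w4, by rw [hperm]; exact w5⟩
  have P213 : ({U1,U2,U3} : Finset (Finset α)) = {U2,U1,U3} := Finset.insert_comm U1 U2 {U3}
  have P132 : ({U1,U2,U3} : Finset (Finset α)) = {U1,U3,U2} := by rw [Finset.pair_comm U2 U3]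
  have P231 : ({U1,U2,U3} : Finset (Finset α)) = {U2,U3,U1} := by rw [Finset.insert_comm U1 U2 ({U3} : Finset (Finset α)), Finset.pair_comm U1 U3]
  have P312 : ({U1,U2,U3} : Finset (Finset α)) = {U3,U1,U2} := by rw [Finset.pair_comm U2 U3, Finset.insert_comm U1 U3 ({U2} : Finset (Finset α))]
  have P321 : ({U1,U2,U3} : Finset (Finset α)) = {U3,U2,U1} := by rw [Finset.pair_comm U2 U3, Finset.insert_comm U1 U3 ({U2} : Finset (Finset α)), Finset.pair_comm U1 U2]
  clear h1 h2 h3 h4 h5 h6 mS1 mS2 mS3 mU1 mU2 mU3 hp1 hp2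
  rcases d1 with ⟨q11, q12, q13⟩ | ⟨q11, q12, q13⟩ | ⟨q11, q12, q13⟩ <;>
  rcases d2 with ⟨q21, q22, q23⟩ | ⟨q21, q22, q23⟩ | ⟨q21, q22, q23⟩ <;>
  rcases d3 with ⟨q31, q32, q33⟩ | ⟨q31, q32, q33⟩ | ⟨q31, q32, q33⟩ <;>
  first
  | (apply key U1 U2 U3 rfl cU1 cU2 cU3 <;> assumption)
  | (apply key U2 U1 U3 P213 cU2 cU1 cU3 <;> assumption)
  | (apply key U1 U3 U2 P132 cU1 cU3 cU2 <;> assumption)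
  | (apply key U2 U3 U1 P231 cU2 cU3 cU1 <;> assumption)
  | (apply key U3 U1 U2 P312 cU3 cU1 cU2 <;> assumption)
  | (apply key U3 U2 U1 P321 cU3 cU2 cU1 <;> assumption)
  | (exfalso; apply noAB e1 <;> assumption)
  | (exfalso; apply noAC e1 <;> assumption)
  | (exfalso; apply noBC e1 <;> assumption)
  | (exfalso; apply noAB e2 <;> assumption)
  | (exfalso; apply noAC e2 <;> assumption)
  | (exfalso; apply noBC e2 <;> assumption)
  | (exfalso; apply noAB e3 <;> assumption)
  | (exfalso; apply noAC e3 <;> assumption)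
  | (exfalso; apply noBC e3 <;> assumption)




/-- The number of 6-cycles in the Tanner graph of the Macula matrix `M(D, D+1, N)`,
counted as pairs `(𝒮, 𝒰)` where `𝒮` is a set of three `D`-subsets of `{1, …, N}`,
`𝒰` is a set of three `(D+1)`-subsets, each member of `𝒮` is contained in exactly two
members of `𝒰`, and each member of `𝒰` contains exactly two members of `𝒮`,
equals `C(N, D+2) · C(D+2, 3)`. -/
theorem macula_six_cycle_count (D N : ℕ) (hD : 1 ≤ D) (hN : D + 2 ≤ N) :
    ((Finset.univ : Finset (Finset (Finset (Fin N)) × Finset (Finset (Fin N)))).filter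
      (fun p =>
        p.1.card = 3 ∧ (∀ S ∈ p.1, S.card = D) ∧
        p.2.card = 3 ∧ (∀ U ∈ p.2, U.card = D + 1) ∧
        (∀ S ∈ p.1, (p.2.filter (fun U => S ⊆ U)).card = 2) ∧
        (∀ U ∈ p.2, (p.1.filter (fun S => S ⊆ U)).card = 2))).card
      = N.choose (D + 2) * (D + 2).choose 3 := by
  classical
  have hcard : ((Finset.univ : Finset (Finset (Finset (Fin N)) × Finset (Finset (Fin N)))).filter
      (fun p =>
        p.1.card = 3 ∧ (∀ S ∈ p.1, S.card = D) ∧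
        p.2.card = 3 ∧ (∀ U ∈ p.2, U.card = D + 1) ∧
        (∀ S ∈ p.1, (p.2.filter (fun U => S ⊆ U)).card = 2) ∧
        (∀ U ∈ p.2, (p.1.filter (fun S => S ⊆ U)).card = 2))).card
      = ((Finset.univ.powersetCard (D+2)).sigma
          (fun W : Finset (Fin N) => W.powersetCard 3)).card := by
    apply Finset.card_nbij'
      (i := fun p => ⟨p.1.sup id, (p.1.sup id) \ (p.1.inf id)⟩)
      (j := fun q => (q.2.image fun a => q.1 \ q.2.erase a, q.2.image fun a => q.1.erase a))
    · intro p hp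
      rw [Finset.mem_coe, Finset.mem_filter] at hp
      obtain ⟨-, h1, h2, h3, h4, h5, h6⟩ := hp
      obtain ⟨W, T, hW, hTW, hT, hp1, hp2⟩ := structure_thm h1 h2 h3 h4 h5 h6
      rw [Finset.mem_coe, Finset.mem_sigma]
      have hsup : p.1.sup id = W := by rw [hp1, sup_eq hTW (by omega)]
      have hinf : p.1.inf id = W \ T := by rw [hp1, inf_eq hTW (by omega)]
      dsimp only
      rw [hsup, hinf, Finset.sdiff_sdiff_eq_self hTW]
      exact ⟨Finset.mem_powersetCard.mpr ⟨Finset.subset_univ W, hW⟩,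
        Finset.mem_powersetCard.mpr ⟨hTW, hT⟩⟩
    · intro q hq
      rw [Finset.mem_coe, Finset.mem_sigma, Finset.mem_powersetCard, Finset.mem_powersetCard] at hq
      obtain ⟨⟨-, hW⟩, hTW, hT⟩ := hq
      obtain ⟨f1, f2, f3, f4, f5, f6⟩ := forward hW hTW hT
      rw [Finset.mem_coe, Finset.mem_filter]
      exact ⟨Finset.mem_univ _, f1, f2, f3, f4, f5, f6⟩
    · intro p hp
      rw [Finset.mem_coe, Finset.mem_filter] at hp
      obtain ⟨-, h1, h2, h3, h4, h5, h6⟩ := hp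
      obtain ⟨W, T, hW, hTW, hT, hp1, hp2⟩ := structure_thm h1 h2 h3 h4 h5 h6
      have hsup : p.1.sup id = W := by rw [hp1, sup_eq hTW (by omega)]
      have hinf : p.1.inf id = W \ T := by rw [hp1, inf_eq hTW (by omega)]
      simp only [hsup, hinf, Finset.sdiff_sdiff_eq_self hTW]
      exact Prod.ext hp1.symm hp2.symm
    · rintro ⟨W, T⟩ hq
      rw [Finset.mem_coe, Finset.mem_sigma, Finset.mem_powersetCard, Finset.mem_powersetCard] at hq
      obtain ⟨⟨-, hW⟩, hTW, hT⟩ := hq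
      simp only [sup_eq hTW (by omega), inf_eq hTW (by omega),
        Finset.sdiff_sdiff_eq_self hTW]
  rw [hcard, Finset.card_sigma]
  rw [Finset.sum_congr rfl (fun W hW => by
    rw [Finset.card_powersetCard, (Finset.mem_powersetCard.mp hW).2])]
  rw [Finset.sum_const, Finset.card_powersetCard, Finset.card_univ, Fintype.card_fin,
    smul_eq_mul]
end

section
/- Let D ≥ 1 and N ≥ D + 2 be integers, and regard the Macula matrix M(D, D+1, N) as a matrix over F_2. Then the minimum Hamming weight of a nonzero vector x (indexed by the (D+1)-element subsets of {1,…,N}) satisfying M(D,D+1,N)·x = 0 is exactly D + 2; that is, the code with parity-check matrix M(D, D+1, N) has minimum distance exactly D + 2. -/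
/-- The Macula matrix `M(D, K, N)`: rows are indexed by `D`-subsets of `{1, …, N}`, columns
by `K`-subsets, and the `(S, U)` entry is `1` if `S ⊆ U` and `0` otherwise, over `F₂`. -/
def maculaMatrix (D K N : ℕ) :
    Matrix {S : Finset (Fin N) // S.card = D} {U : Finset (Fin N) // U.card = K} (ZMod 2) :=
  fun S U => if S.val ⊆ U.val then 1 else 0

/-- The (D+1)-subsets of a (D+2)-set W containing a fixed D-subset S of W are exactly
`insert a S` for `a ∈ W \ S`, of which there are 2. -/
lemma macula_filter_card_two {N D : ℕ} (S W : Finset (Fin N)) (hS : S.card = D)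
    (hW : W.card = D + 2) (hSW : S ⊆ W) :
    ((W.powersetCard (D + 1)).filter (fun U => S ⊆ U)).card = 2 := by
  have himg : (W.powersetCard (D + 1)).filter (fun U => S ⊆ U)
      = (W \ S).image (fun a => insert a S) := by
    ext U
    simp only [Finset.mem_filter, Finset.mem_powersetCard, Finset.mem_image, Finset.mem_sdiff]
    constructor
    · rintro ⟨⟨hUW, hUcard⟩, hSU⟩
      have h1 : (U \ S).card = 1 := by
        rw [Finset.card_sdiff_of_subset hSU, hUcard, hS]; omega
      obtain ⟨a, ha⟩ := Finset.card_eq_one.mp h1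
      have haU : a ∈ U \ S := ha ▸ Finset.mem_singleton_self a
      rw [Finset.mem_sdiff] at haU
      refine ⟨a, ⟨hUW haU.1, haU.2⟩, ?_⟩
      apply Finset.eq_of_subset_of_card_le
      · exact Finset.insert_subset haU.1 hSU
      · rw [hUcard, Finset.card_insert_of_notMem haU.2, hS]
    · rintro ⟨a, ⟨haW, haS⟩, rfl⟩
      exact ⟨⟨Finset.insert_subset haW hSW,
        by rw [Finset.card_insert_of_notMem haS, hS]⟩, Finset.subset_insert _ _⟩
  have hinj : Set.InjOn (fun a => insert a S) ↑(W \ S) := by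
    intro a ha b hb hab
    simp only [Finset.coe_sdiff, Set.mem_diff, Finset.mem_coe] at ha hb
    have hab' : insert a S = insert b S := hab
    have : a ∈ insert b S := by rw [← hab']; exact Finset.mem_insert_self a S
    rcases Finset.mem_insert.mp this with h | h
    · exact h
    · exact absurd h ha.2
  rw [himg, Finset.card_image_of_injOn hinj, Finset.card_sdiff_of_subset hSW, hW, hS]
  omega

/-- Nonzero elements of `ZMod 2` equal 1. -/
lemma zmod2_ne_zero {a : ZMod 2} (h : a ≠ 0) : a = 1 := by revert h; revert a; decide

/-- The code with parity-check matrix `M(D, D+1, N)` has minimum distance exactly `D + 2`: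
`D + 2` is the least Hamming weight of a nonzero vector in the `F₂`-kernel. -/
theorem macula_min_distance (D N : ℕ) (hD : 1 ≤ D) (hN : D + 2 ≤ N) :
    IsLeast {w : ℕ | ∃ x : {U : Finset (Fin N) // U.card = D + 1} → ZMod 2,
      x ≠ 0 ∧ (maculaMatrix D (D + 1) N).mulVec x = 0 ∧
      w = (Finset.univ.filter (fun U => x U ≠ 0)).card} (D + 2) := by
  constructor
  · -- membership : exists a kernel vector of weight D+2
    obtain ⟨W, -, hW⟩ := Finset.exists_subset_card_eq
      (s := (Finset.univ : Finset (Fin N))) (n := D + 2) (by simpa using hN)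
    refine ⟨fun U => if U.val ⊆ W then 1 else 0, ?_, ?_, ?_⟩
    · -- nonzero
      obtain ⟨U₀, hU₀W, hU₀⟩ := Finset.exists_subset_card_eq (s := W) (n := D + 1) (by omega)
      intro h
      have := congrFun h ⟨U₀, hU₀⟩
      simp only [if_pos hU₀W, Pi.zero_apply] at this
      exact one_ne_zero this
    · -- kernel
      funext S
      simp only [Matrix.mulVec, dotProduct, maculaMatrix, ite_mul, one_mul, zero_mul,
        Pi.zero_apply]
      have : (∑ U : {U : Finset (Fin N) // U.card = D + 1},
          if S.val ⊆ U.val then (if U.val ⊆ W then (1 : ZMod 2) else 0) else 0)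
          = ∑ U : {U : Finset (Fin N) // U.card = D + 1},
            if S.val ⊆ U.val ∧ U.val ⊆ W then (1 : ZMod 2) else 0 := by
        apply Finset.sum_congr rfl; intro U _
        by_cases h1 : S.val ⊆ U.val <;> by_cases h2 : U.val ⊆ W <;> simp [h1, h2]
      rw [this, Finset.sum_boole]
      by_cases hSW : S.val ⊆ W
      · have hcard : (Finset.univ.filter
            (fun U : {U : Finset (Fin N) // U.card = D + 1} => S.val ⊆ U.val ∧ U.val ⊆ W)).card
            = ((W.powersetCard (D + 1)).filter (fun U => S.val ⊆ U)).card := by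
          apply Finset.card_bij (fun U _ => U.val)
          · intro U hU
            simp only [Finset.mem_filter, Finset.mem_univ, true_and] at hU
            simp only [Finset.mem_filter, Finset.mem_powersetCard]
            exact ⟨⟨hU.2, U.2⟩, hU.1⟩
          · intro U₁ _ U₂ _ h
            exact Subtype.ext h
          · intro V hV
            simp only [Finset.mem_filter, Finset.mem_powersetCard] at hV
            exact ⟨⟨V, hV.1.2⟩, by simp [hV.1.1, hV.2], rfl⟩
        rw [hcard, macula_filter_card_two S.val W S.2 hW hSW]
        decide
      · have : (Finset.univ.filter
            (fun U : {U : Finset (Fin N) // U.card = D + 1} => S.val ⊆ U.val ∧ U.val ⊆ W)) = ∅ := by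
          apply Finset.filter_false_of_mem
          intro U _
          rintro ⟨h1, h2⟩
          exact hSW (h1.trans h2)
        rw [this]; simp
    · -- weight is D+2
      have : (Finset.univ.filter
          (fun U : {U : Finset (Fin N) // U.card = D + 1} =>
            (if U.val ⊆ W then (1 : ZMod 2) else 0) ≠ 0)).card
          = ((W.powersetCard (D + 1)).card) := by
        apply Finset.card_bij (fun U _ => U.val)
        · intro U hU
          simp only [Finset.mem_filter, Finset.mem_univ, true_and, ne_eq, ite_eq_right_iff,
            one_ne_zero, imp_false, not_not] at hU
          by_cases h : U.val ⊆ W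
          · simp [Finset.mem_powersetCard, h, U.2]
          · simp [h] at hU
        · intro U₁ _ U₂ _ h
          exact Subtype.ext h
        · intro V hV
          simp only [Finset.mem_powersetCard] at hV
          exact ⟨⟨V, hV.2⟩, by simp [hV.1], rfl⟩
      rw [this, Finset.card_powersetCard, hW]
      rw [show D + 2 = (D + 1) + 1 from rfl, Nat.choose_succ_self_right]
  · -- lower bound
    rintro w ⟨x, hx0, hker, rfl⟩
    set supp := Finset.univ.filter
      (fun U : {U : Finset (Fin N) // U.card = D + 1} => x U ≠ 0) with hsupp
    -- pick U₀ in the support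
    have hexU₀ : ∃ U₀, x U₀ ≠ 0 := by
      by_contra h
      push_neg at h
      exact hx0 (funext fun U => h U)
    obtain ⟨U₀, hU₀x⟩ := hexU₀
    have hU₀ : U₀ ∈ supp := by simp [hsupp, hU₀x]
    -- every D-subset of a support set lies in an even number of support sets
    have heven : ∀ S : Finset (Fin N), S.card = D →
        Even ((supp.filter (fun U => S ⊆ U.val)).card) := by
      intro S hS
      have h0 := congrFun hker ⟨S, hS⟩
      simp only [Matrix.mulVec, dotProduct, maculaMatrix, ite_mul, one_mul, zero_mul,
        Pi.zero_apply] at h0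
      rw [← Finset.sum_filter] at h0
      have hres : ∑ U ∈ (Finset.univ.filter
            (fun U : {U : Finset (Fin N) // U.card = D + 1} => S ⊆ U.val)).filter
            (fun U => x U ≠ 0), x U
          = ∑ U ∈ Finset.univ.filter
            (fun U : {U : Finset (Fin N) // U.card = D + 1} => S ⊆ U.val), x U :=
        Finset.sum_filter_of_ne (fun U _ h => h)
      have hsets : (Finset.univ.filter
            (fun U : {U : Finset (Fin N) // U.card = D + 1} => S ⊆ U.val)).filter
            (fun U => x U ≠ 0) = supp.filter (fun U => S ⊆ U.val) := by
        ext U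
        simp [hsupp, Finset.mem_filter, and_comm]
      have hones : ∑ U ∈ supp.filter (fun U => S ⊆ U.val), x U
          = ((supp.filter (fun U => S ⊆ U.val)).card : ZMod 2) := by
        rw [Finset.sum_congr rfl (fun U hU => ?_), Finset.sum_const, nsmul_eq_mul, mul_one]
        have h1 := Finset.mem_filter.mp hU
        have h2 := Finset.mem_filter.mp h1.1
        exact zmod2_ne_zero h2.2
      rw [hsets, hones, h0] at hres
      have := (ZMod.natCast_eq_zero_iff _ 2).mp hres
      exact (even_iff_two_dvd).mpr this
    -- for each D-subset S of U₀, there is another support set containing S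
    have hex : ∀ S : Finset (Fin N), ∃ U : {U : Finset (Fin N) // U.card = D + 1},
        S ∈ U₀.val.powersetCard D → (U ∈ supp ∧ U ≠ U₀ ∧ S ⊆ U.val) := by
      intro S
      by_cases h : S ∈ U₀.val.powersetCard D
      · rw [Finset.mem_powersetCard] at h
        have hmem : U₀ ∈ supp.filter (fun U => S ⊆ U.val) := by
          simp only [Finset.mem_filter]
          exact ⟨hU₀, h.1⟩
        have hcard2 : 1 < (supp.filter (fun U => S ⊆ U.val)).card := by
          have he := heven S h.2
          have hpos : 0 < (supp.filter (fun U => S ⊆ U.val)).card :=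
            Finset.card_pos.mpr ⟨U₀, hmem⟩
          obtain ⟨k, hk⟩ := he
          omega
        obtain ⟨U', hU', hne⟩ := Finset.exists_mem_ne hcard2 U₀
        rw [Finset.mem_filter] at hU'
        exact ⟨U', fun _ => ⟨hU'.1, hne, hU'.2⟩⟩
      · exact ⟨U₀, fun h' => absurd h' h⟩
    choose f hf using hex
    -- f is injective on D-subsets of U₀ with values in supp \ {U₀}
    have hcardle : (U₀.val.powersetCard D).card ≤ (supp.erase U₀).card := by
      apply Finset.card_le_card_of_injOn f
      · intro S hS
        obtain ⟨h1, h2, _⟩ := hf S hS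
        exact Finset.mem_erase.mpr ⟨h2, h1⟩
      · intro S₁ hS₁ S₂ hS₂ heq
        simp only [Finset.mem_coe] at hS₁ hS₂
        obtain ⟨_, hne₁, hsub₁⟩ := hf S₁ hS₁
        obtain ⟨_, hne₂, hsub₂⟩ := hf S₂ hS₂
        rw [Finset.mem_powersetCard] at hS₁ hS₂
        by_contra hSne
        -- S₁ ∪ S₂ has card ≥ D+1, is ⊆ U₀.val and ⊆ (f S₁).val, both of card D+1
        have hUcard : D + 1 ≤ (S₁ ∪ S₂).card := by
          by_contra hlt
          push_neg at hlt
          have hle : (S₁ ∪ S₂).card ≤ S₁.card := by omega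
          have h1 : S₁ = S₁ ∪ S₂ :=
            Finset.eq_of_subset_of_card_le Finset.subset_union_left hle
          have h21 : S₂ ⊆ S₁ := by rw [h1]; exact Finset.subset_union_right
          exact hSne (Finset.eq_of_subset_of_card_le h21 (by omega)).symm
        have hsubU : S₁ ∪ S₂ ⊆ U₀.val := Finset.union_subset hS₁.1 hS₂.1
        have hequ : S₁ ∪ S₂ = U₀.val :=
          Finset.eq_of_subset_of_card_le hsubU (by rw [U₀.2]; exact hUcard)
        have hsubf : S₁ ∪ S₂ ⊆ (f S₁).val := by
          apply Finset.union_subset hsub₁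
          rw [heq]; exact hsub₂
        have heqf : S₁ ∪ S₂ = (f S₁).val :=
          Finset.eq_of_subset_of_card_le hsubf (by rw [(f S₁).2]; exact hUcard)
        exact hne₁ (Subtype.ext (heqf.symm.trans hequ))
    have hpc : (U₀.val.powersetCard D).card = D + 1 := by
      rw [Finset.card_powersetCard, U₀.2, Nat.choose_succ_self_right]
    have h1 : 1 ≤ supp.card := Finset.card_pos.mpr ⟨U₀, hU₀⟩
    have h2 : (supp.erase U₀).card = supp.card - 1 := Finset.card_erase_of_mem hU₀
    omega
end

section
/- Let D ≥ 1 and N ≥ D + 2 be integers. The minimum size of a nonempty stopping set of the Macula matrix M(D, D+1, N) is exactly D + 2. -/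
lemma macula_eq_one_iff (D K N : ℕ) (S : {S : Finset (Fin N) // S.card = D})
    (U : {U : Finset (Fin N) // U.card = K}) :
    maculaMatrix D K N S U = 1 ↔ S.val ⊆ U.val := by
  unfold maculaMatrix
  split_ifs with h
  · simp [h]
  · simp only [h, iff_false]
    decide

/-- The minimum size of a nonempty stopping set of the Macula matrix `M(D, D+1, N)` is
exactly `D + 2`. A stopping set is a set of columns such that no row has exactly one `1`
among those columns. -/
theorem macula_stopping_distance (D N : ℕ) (hD : 1 ≤ D) (hN : D + 2 ≤ N) :
    IsLeast {s : ℕ | ∃ V : Finset {U : Finset (Fin N) // U.card = D + 1},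
      V.Nonempty ∧
      (∀ S : {S : Finset (Fin N) // S.card = D},
        (V.filter (fun U => maculaMatrix D (D + 1) N S U = 1)).card ≠ 1) ∧
      s = V.card} (D + 2) := by
  constructor
  · -- membership: the set of all (D+1)-subsets of a fixed (D+2)-set W
    obtain ⟨W, -, hW⟩ := Finset.exists_subset_card_eq (s := (Finset.univ : Finset (Fin N))) (n := D + 2)
      (by simpa using hN)
    refine ⟨Finset.univ.filter (fun U => U.val ⊆ W), ?_, ?_, ?_⟩
    · obtain ⟨U, hUW, hUc⟩ := Finset.exists_subset_card_eq (s := W) (n := D + 1) (by omega)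
      exact ⟨⟨U, hUc⟩, by simp [hUW]⟩
    · intro S
      have hfilter : ((Finset.univ.filter
            (fun U : {U : Finset (Fin N) // U.card = D + 1} => U.val ⊆ W)).filter
            (fun U => maculaMatrix D (D + 1) N S U = 1))
          = Finset.univ.filter
            (fun U : {U : Finset (Fin N) // U.card = D + 1} => U.val ⊆ W ∧ S.val ⊆ U.val) := by
        ext U
        simp [macula_eq_one_iff]
      rw [hfilter]
      by_cases hSW : S.val ⊆ W
      · have hcard : (W \ S.val).card = (Finset.univ.filter
            (fun U : {U : Finset (Fin N) // U.card = D + 1} =>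
              U.val ⊆ W ∧ S.val ⊆ U.val)).card := by
          refine Finset.card_bij (fun x hx => (⟨insert x S.val, by
            rw [Finset.card_insert_of_notMem (Finset.mem_sdiff.mp hx).2, S.prop]⟩ :
              {U : Finset (Fin N) // U.card = D + 1})) ?_ ?_ ?_
          · intro x hx
            obtain ⟨hxW, hxS⟩ := Finset.mem_sdiff.mp hx
            simp only [Finset.mem_filter, Finset.mem_univ, true_and]
            exact ⟨Finset.insert_subset hxW hSW, Finset.subset_insert _ _⟩
          · intro x hx y hy h
            obtain ⟨hxW, hxS⟩ := Finset.mem_sdiff.mp hx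
            obtain ⟨hyW, hyS⟩ := Finset.mem_sdiff.mp hy
            have h' : insert x S.val = insert y S.val := congrArg Subtype.val h
            have : x ∈ insert y S.val := h' ▸ Finset.mem_insert_self x S.val
            rcases Finset.mem_insert.mp this with h'' | h''
            · exact h''
            · exact absurd h'' hxS
          · intro U hU
            simp only [Finset.mem_filter, Finset.mem_univ, true_and] at hU
            obtain ⟨hUW, hSU⟩ := hU
            have h1 : (U.val \ S.val).card = 1 := by
              rw [Finset.card_sdiff_of_subset hSU, U.prop, S.prop]
              omega
            obtain ⟨x, hx⟩ := Finset.card_eq_one.mp h1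
            have hxU : x ∈ U.val \ S.val := hx ▸ Finset.mem_singleton_self x
            obtain ⟨hxU', hxS⟩ := Finset.mem_sdiff.mp hxU
            refine ⟨x, Finset.mem_sdiff.mpr ⟨hUW hxU', hxS⟩, ?_⟩
            apply Subtype.ext
            show insert x S.val = U.val
            rw [Finset.insert_eq, ← hx, Finset.sdiff_union_of_subset hSU]
        rw [← hcard, Finset.card_sdiff_of_subset hSW, hW, S.prop]
        omega
      · have : Finset.univ.filter
            (fun U : {U : Finset (Fin N) // U.card = D + 1} =>
              U.val ⊆ W ∧ S.val ⊆ U.val) = ∅ := by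
          apply Finset.eq_empty_of_forall_notMem
          intro U hU
          simp only [Finset.mem_filter, Finset.mem_univ, true_and] at hU
          exact hSW (hU.2.trans hU.1)
        rw [this]
        simp
    · have : (Finset.univ.filter
          (fun U : {U : Finset (Fin N) // U.card = D + 1} => U.val ⊆ W)).card
          = (W.powersetCard (D + 1)).card := by
        refine Finset.card_bij (fun U _ => U.val) ?_ ?_ ?_
        · intro U hU
          simp only [Finset.mem_filter, Finset.mem_univ, true_and] at hU
          exact Finset.mem_powersetCard.mpr ⟨hU, U.prop⟩
        · intro a ha b hb h
          exact Subtype.ext h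
        · intro A hA
          obtain ⟨hAW, hAc⟩ := Finset.mem_powersetCard.mp hA
          exact ⟨⟨A, hAc⟩, by simp [hAW], rfl⟩
      rw [this, Finset.card_powersetCard, hW]
      exact (Nat.choose_succ_self_right (D + 1)).symm
  · -- lower bound
    rintro s ⟨V, ⟨U₀, hU₀⟩, hstop, rfl⟩
    have key : ∀ Sv ∈ U₀.val.powersetCard D,
        ∃ U ∈ V.erase U₀, Sv ⊆ U.val := by
      intro Sv hSv
      obtain ⟨hsub, hcard⟩ := Finset.mem_powersetCard.mp hSv
      have h1 := hstop ⟨Sv, hcard⟩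
      set F := V.filter (fun U => maculaMatrix D (D + 1) N ⟨Sv, hcard⟩ U = 1) with hF
      have hU₀F : U₀ ∈ F := by
        rw [hF, Finset.mem_filter, macula_eq_one_iff]
        exact ⟨hU₀, hsub⟩
      have hpos : 0 < F.card := Finset.card_pos.mpr ⟨U₀, hU₀F⟩
      have h2 : 2 ≤ F.card := by omega
      have herase : 0 < (F.erase U₀).card := by
        rw [Finset.card_erase_of_mem hU₀F]
        omega
      obtain ⟨U, hU⟩ := Finset.card_pos.mp herase
      obtain ⟨hne, hUF⟩ := Finset.mem_erase.mp hU
      rw [hF, Finset.mem_filter, macula_eq_one_iff] at hUF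
      exact ⟨U, Finset.mem_erase.mpr ⟨hne, hUF.1⟩, hUF.2⟩
    choose g hg1 hg2 using key
    have hle : ((U₀.val.powersetCard D).attach).card ≤ (V.erase U₀).card := by
      refine Finset.card_le_card_of_injOn (fun x => g x.1 x.2)
        (fun x _ => hg1 x.1 x.2) ?_
      intro a _ b _ hab
      by_contra hne
      have hab1 : a.1 ≠ b.1 := fun h => hne (Subtype.ext h)
      set U := g a.1 a.2 with hU
      have hbU : g b.1 b.2 = U := hab.symm
      have haU : a.1 ⊆ U.val := hg2 a.1 a.2
      have hbUv : b.1 ⊆ U.val := hbU ▸ hg2 b.1 b.2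
      obtain ⟨haU₀, hacard⟩ := Finset.mem_powersetCard.mp a.2
      obtain ⟨hbU₀, hbcard⟩ := Finset.mem_powersetCard.mp b.2
      have hunion : a.1 ∪ b.1 ⊆ U.val := Finset.union_subset haU hbUv
      have hunion₀ : a.1 ∪ b.1 ⊆ U₀.val := Finset.union_subset haU₀ hbU₀
      have hcardU : (a.1 ∪ b.1).card ≠ D := by
        intro h
        have h3 : a.1 = a.1 ∪ b.1 := by
          apply Finset.eq_of_subset_of_card_le Finset.subset_union_left
          rw [h, hacard]
        have h4 : b.1 ⊆ a.1 := h3 ▸ Finset.subset_union_right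
        exact hab1 ((Finset.eq_of_subset_of_card_le h4 (by rw [hacard, hbcard])).symm)
      have hge : D + 1 ≤ (a.1 ∪ b.1).card := by
        have := Finset.card_le_card (Finset.subset_union_left : a.1 ⊆ a.1 ∪ b.1)
        rw [hacard] at this
        omega
      have hUeq : U.val = a.1 ∪ b.1 :=
        (Finset.eq_of_subset_of_card_le hunion (by rw [U.prop]; exact hge)).symm
      have hU₀eq : U₀.val = a.1 ∪ b.1 :=
        (Finset.eq_of_subset_of_card_le hunion₀ (by rw [U₀.prop]; exact hge)).symm
      have : U = U₀ := Subtype.ext (hUeq.trans hU₀eq.symm)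
      exact (Finset.mem_erase.mp (hg1 a.1 a.2)).1 this
    rw [Finset.card_attach, Finset.card_powersetCard, U₀.prop,
      Nat.choose_succ_self_right, Finset.card_erase_of_mem hU₀] at hle
    have hVpos : 0 < V.card := Finset.card_pos.mpr ⟨U₀, hU₀⟩
    omega
end

section
/- Let t ≥ 2, let V be a finite set, and let B be a family of (t+1)-element subsets of V such that every t-element subset of V is contained in at most one member of B (a t-packing with block size t+1). Then there do not exist two distinct (t−1)-element subsets S₁ ≠ S₂ of V and two distinct blocks U₁ ≠ U₂ in B such that Sᵢ ⊆ Uⱼ for all i, j ∈ {1,2}. Equivalently, the Tanner graph of the incidence matrix M_{t−1} of (t−1)-subsets versus blocks contains no 4-cycle, so its girth is at least 6. -/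
/-- For a `t`-packing with block size `t + 1` (a family `B` of `(t+1)`-subsets of `V` such
that every `t`-subset of `V` lies in at most one block), the Tanner graph of the incidence
matrix of `(t−1)`-subsets versus blocks has no 4-cycle: there are no two distinct
`(t−1)`-subsets `S₁ ≠ S₂` and two distinct blocks `U₁ ≠ U₂` with `Sᵢ ⊆ Uⱼ` for all `i, j`. -/
theorem tPacking_no_four_cycle {V : Type*} [Fintype V] [DecidableEq V]
    (t : ℕ) (ht : 2 ≤ t) (B : Finset (Finset V))
    (hblock : ∀ b ∈ B, b.card = t + 1)
    (hpack : ∀ T : Finset V, T.card = t → ∀ b₁ ∈ B, ∀ b₂ ∈ B, T ⊆ b₁ → T ⊆ b₂ → b₁ = b₂) :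
    ¬ ∃ (S₁ S₂ U₁ U₂ : Finset V),
        S₁.card = t - 1 ∧ S₂.card = t - 1 ∧ S₁ ≠ S₂ ∧
        U₁ ∈ B ∧ U₂ ∈ B ∧ U₁ ≠ U₂ ∧
        S₁ ⊆ U₁ ∧ S₁ ⊆ U₂ ∧ S₂ ⊆ U₁ ∧ S₂ ⊆ U₂ := by
  rintro ⟨S₁, S₂, U₁, U₂, h1, h2, hne, hU1, hU2, hUne, h11, h12, h21, h22⟩
  -- S₁ ∪ S₂ has at least t elements
  obtain ⟨x, hx2, hx1⟩ : ∃ x ∈ S₂, x ∉ S₁ := by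
    by_contra h
    push_neg at h
    exact hne (Finset.eq_of_subset_of_card_le h (by omega)).symm
  have hcard : t ≤ (S₁ ∪ S₂).card := by
    have : (insert x S₁).card ≤ (S₁ ∪ S₂).card := by
      apply Finset.card_le_card
      intro y hy
      rcases Finset.mem_insert.mp hy with rfl | hy
      · exact Finset.mem_union_right _ hx2
      · exact Finset.mem_union_left _ hy
    rw [Finset.card_insert_of_notMem hx1, h1] at this
    omega
  obtain ⟨T, hTsub, hTcard⟩ := Finset.exists_subset_card_eq hcard
  have hTU1 : T ⊆ U₁ := hTsub.trans (Finset.union_subset h11 h21)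
  have hTU2 : T ⊆ U₂ := hTsub.trans (Finset.union_subset h12 h22)
  exact hUne (hpack T hTcard U₁ hU1 U₂ hU2 hTU1 hTU2)
end

section
/- Let t ≤ k be positive integers, let V be a finite set, and let B be a family of k-element subsets of V such that every t-element subset of V is contained in at most one member of B (a t-packing with block size k). Let r be an integer with 1 ≤ r ≤ t − 1 and set D = ⌈C(k,r)/C(t−1,r)⌉ − 1. Then for every block U ∈ B and every set T ⊆ B with U ∉ T and |T| ≤ D, there exists an r-element subset S of U such that S is not a subset of any member of T. (That is, the incidence matrix M_r of r-subsets of V versus blocks of B is D-disjunct.) -/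
lemma ceilDiv_pred_mul_lt (a b : ℕ) (ha : 0 < a) (hb : 0 < b) :
    (a ⌈/⌉ b - 1) * b < a := by
  rw [Nat.ceilDiv_eq_add_pred_div]
  set q := (a + b - 1) / b with hq
  have h1 : q * b ≤ a + b - 1 := Nat.div_mul_le_self _ _
  have h2 : 1 ≤ q := by
    rw [hq, Nat.le_div_iff_mul_le hb]
    omega
  have h3 : (q - 1) * b = q * b - b := by
    rw [Nat.sub_mul, one_mul]
  omega

/-- Fu–Hwang: for a `t`-packing `B` with block size `k` on `V`, the incidence matrix `M_r`
of `r`-subsets of `V` versus blocks of `B` is `D`-disjunct with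
`D = ⌈C(k,r)/C(t−1,r)⌉ − 1`: for each block `U` and each set `T` of at most `D` other
blocks, some `r`-subset of `U` is contained in no block of `T`. -/
theorem tPacking_disjunct {V : Type*} [Fintype V] [DecidableEq V]
    (t k : ℕ) (ht : 1 ≤ t) (htk : t ≤ k)
    (B : Finset (Finset V))
    (hblock : ∀ b ∈ B, b.card = k)
    (hpack : ∀ T : Finset V, T.card = t → ∀ b₁ ∈ B, ∀ b₂ ∈ B, T ⊆ b₁ → T ⊆ b₂ → b₁ = b₂)
    (r : ℕ) (hr1 : 1 ≤ r) (hr2 : r ≤ t - 1)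
    (U : Finset V) (hU : U ∈ B)
    (T : Finset (Finset V)) (hTB : T ⊆ B) (hUT : U ∉ T)
    (hTcard : T.card ≤ (k.choose r ⌈/⌉ (t - 1).choose r) - 1) :
    ∃ S : Finset V, S.card = r ∧ S ⊆ U ∧ ∀ b ∈ T, ¬ S ⊆ b := by
  classical
  have hinter : ∀ b ∈ T, (U ∩ b).card ≤ t - 1 := by
    intro b hb
    by_contra h
    push_neg at h
    have ht' : t ≤ (U ∩ b).card := by omega
    obtain ⟨S, hS, hScard⟩ := Finset.exists_subset_card_eq ht'
    have hUb := hpack S hScard U hU b (hTB hb)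
      (hS.trans Finset.inter_subset_left) (hS.trans Finset.inter_subset_right)
    exact hUT (hUb ▸ hb)
  set covered : Finset (Finset V) := T.biUnion (fun b => (U ∩ b).powersetCard r) with hcovdef
  have hcov : covered.card ≤ T.card * (t - 1).choose r := by
    calc covered.card ≤ ∑ b ∈ T, ((U ∩ b).powersetCard r).card := Finset.card_biUnion_le
    _ ≤ ∑ b ∈ T, (t - 1).choose r := by
        apply Finset.sum_le_sum
        intro b hb
        rw [Finset.card_powersetCard]
        exact Nat.choose_le_choose r (hinter b hb)
    _ = T.card * (t - 1).choose r := by rw [Finset.sum_const, smul_eq_mul]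
  have hrk : r ≤ k := by omega
  have hkr : 0 < k.choose r := Nat.choose_pos hrk
  have hbr : 0 < (t - 1).choose r := Nat.choose_pos hr2
  have hlt : covered.card < k.choose r := by
    have h1 : T.card * (t - 1).choose r ≤
        (k.choose r ⌈/⌉ (t - 1).choose r - 1) * (t - 1).choose r :=
      Nat.mul_le_mul_right _ hTcard
    have h2 := ceilDiv_pred_mul_lt (k.choose r) ((t - 1).choose r) hkr hbr
    omega
  have hall : (U.powersetCard r).card = k.choose r := by
    rw [Finset.card_powersetCard, hblock U hU]
  obtain ⟨S, hSmem, hSnot⟩ : ∃ S ∈ U.powersetCard r, S ∉ covered := by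
    by_contra h
    push_neg at h
    have hsub : U.powersetCard r ⊆ covered := h
    have := Finset.card_le_card hsub
    omega
  rw [Finset.mem_powersetCard] at hSmem
  refine ⟨S, hSmem.2, hSmem.1, ?_⟩
  intro b hb hSb
  apply hSnot
  rw [hcovdef, Finset.mem_biUnion]
  refine ⟨b, hb, ?_⟩
  rw [Finset.mem_powersetCard]
  exact ⟨Finset.subset_inter hSmem.1 hSb, hSmem.2⟩
end

section
/- Let n > d ≥ 1 be integers, let A be a type (alphabet), and let C be a set of vectors in Aⁿ such that any two distinct elements of C differ in at least d coordinates (Hamming distance at least d). Set D = ⌊(n−1)/(n−d)⌋. Then for every c ∈ C and every finite set T ⊆ C with c ∉ T and |T| ≤ D, there exists a coordinate i ∈ {1,…,n} such that cᵢ ≠ c'ᵢ for every c' ∈ T. (That is, the Kautz–Singleton binary matrix M(C), whose rows are indexed by pairs (i, α) with i a coordinate and α ∈ A and whose column for codeword c has a 1 in row (i, α) exactly when cᵢ = α, is D-disjunct.) -/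
/-- Kautz–Singleton: if `C` is a code of length `n` over an alphabet `A` in which distinct
codewords are at Hamming distance at least `d`, and `D = ⌊(n−1)/(n−d)⌋`, then for every
codeword `c` and every set `T` of at most `D` other codewords there is a coordinate where
`c` differs from every codeword in `T` (i.e. the Kautz–Singleton matrix is `D`-disjunct). -/
theorem kautzSingleton_disjunct {A : Type*} [DecidableEq A]
    (n d : ℕ) (hd : 1 ≤ d) (hdn : d < n)
    (C : Set (Fin n → A))
    (hdist : ∀ c ∈ C, ∀ c' ∈ C, c ≠ c' → d ≤ hammingDist c c')
    (c : Fin n → A) (hc : c ∈ C)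
    (T : Finset (Fin n → A)) (hTC : ↑T ⊆ C) (hcT : c ∉ T)
    (hTcard : T.card ≤ (n - 1) / (n - d)) :
    ∃ i : Fin n, ∀ c' ∈ T, c i ≠ c' i := by
  by_contra h
  push_neg at h
  -- the set of "bad" coordinates covers everything
  have hcover : (Finset.univ : Finset (Fin n)) ⊆
      T.biUnion (fun c' => Finset.univ.filter (fun i => c i = c' i)) := by
    intro i _
    obtain ⟨c', hc', hi⟩ := h i
    exact Finset.mem_biUnion.2 ⟨c', hc', Finset.mem_filter.2 ⟨Finset.mem_univ _, hi⟩⟩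
  have hcard := (Finset.card_le_card hcover).trans (Finset.card_biUnion_le)
  simp only [Finset.card_univ, Fintype.card_fin] at hcard
  have hbound : ∀ c' ∈ T, (Finset.univ.filter (fun i => c i = c' i)).card ≤ n - d := by
    intro c' hc'
    have hne : c ≠ c' := fun he => hcT (he ▸ hc')
    have hdle : d ≤ hammingDist c c' := hdist c hc c' (hTC hc') hne
    have hkey := Finset.card_filter_add_card_filter_not
      (s := (Finset.univ : Finset (Fin n))) (p := fun i => c i = c' i)
    rw [Finset.card_univ, Fintype.card_fin] at hkey
    have hham : (Finset.univ.filter (fun i => ¬ c i = c' i)).card = hammingDist c c' := by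
      simp [hammingDist]
    rw [hham] at hkey
    have heq : (Finset.univ.filter (fun i => c i = c' i)).card = n - hammingDist c c' :=
      Nat.eq_sub_of_add_eq hkey
    rw [heq]
    exact Nat.sub_le_sub_left hdle n
  have hsum : (T.biUnion (fun c' => Finset.univ.filter (fun i => c i = c' i))).card
      ≤ T.card * (n - d) := by
    calc _ ≤ ∑ c' ∈ T, (Finset.univ.filter (fun i => c i = c' i)).card :=
          Finset.card_biUnion_le
      _ ≤ ∑ _c' ∈ T, (n - d) := Finset.sum_le_sum hbound
      _ = T.card * (n - d) := by rw [Finset.sum_const, smul_eq_mul]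
  have h1 : T.card * (n - d) ≤ ((n - 1) / (n - d)) * (n - d) :=
    Nat.mul_le_mul_right _ hTcard
  have h2 : ((n - 1) / (n - d)) * (n - d) ≤ n - 1 := Nat.div_mul_le_self _ _
  have hfin : n ≤ (T.biUnion (fun c' => Finset.univ.filter (fun i => c i = c' i))).card := by
    have := Finset.card_le_card hcover
    simpa using this
  have hfinal : n ≤ n - 1 := hfin.trans (hsum.trans (h1.trans h2))
  exact absurd hfinal (Nat.not_le.mpr
    (Nat.sub_lt (Nat.lt_of_lt_of_le one_pos (hd.trans hdn.le)) one_pos))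
end
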